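/- Conditional-on-treated identification used in the G-formula proof: under consistency and no unmeasured confounding, for each a ∈ {0,1}, E[Y(a)·1{A=a} | σ(X)] = E[Y(a) | σ(X)]·E[1{A=a} | σ(X)] almost surely, and consequently, if positivity also holds and m(a,·) is a conditional outcome mean, then m(a, X) = E[Y(a) | σ(X)] almost surely. -/

import Mathlib

open MeasureTheory ProbabilityTheory

/-!
Conditional independence of `m₁` and `T` given `m'` says that conditioning on `m₁` as well does
not change the conditional probability of `T`: `P(T | m' ⊔ m₁) = P(T | m')`, and it suffices to
check this on the π-system of sets `t ∩ u` (`t ∈ m'`, `u ∈ m₁`) generating `m' ⊔ m₁`. For an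
`m₁`-measurable `f`, the tower property and pulling out `f` then give
`E[f 1_T | m'] = E[f | m'] P(T | m')`. With `f = Y(a)` and `T = {A = a}`, consistency identifies
the left-hand side with `E[1{A=a} Y | σ(X)] = m(a,X) P(A = a | σ(X))`, and positivity lets us
cancel `P(A = a | σ(X))`.
-/

lemma norm_indicator_one_le_one {α : Type*} (s : Set α) (a : α) :
    ‖s.indicator (fun _ => (1 : ℝ)) a‖ ≤ 1 :=
  (norm_indicator_le_norm_self _ a).trans norm_one.le

lemma indicator_preimage_one_eq_self {α : Type*} {A : α → ℝ} (hA : ∀ a, A a = 0 ∨ A a = 1) :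
    (A ⁻¹' {1}).indicator (fun _ => 1) = A := by
  funext a
  rcases hA a with h | h <;> simp [h]

lemma indicator_preimage_zero_eq_one_sub {α : Type*} {A : α → ℝ} (hA : ∀ a, A a = 0 ∨ A a = 1) :
    (A ⁻¹' {0}).indicator (fun _ => 1) = 1 - A := by
  funext a
  rcases hA a with h | h <;> simp [h]

namespace MeasurableSpace

open Set

variable {Ω : Type*}

lemma isPiSystem_image2_inter (m₁ m₂ : MeasurableSpace Ω) :
    IsPiSystem (image2 (· ∩ ·) {s | MeasurableSet[m₁] s} {s | MeasurableSet[m₂] s}) := by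
  rintro _ ⟨t, ht, u, hu, rfl⟩ _ ⟨t', ht', u', hu', rfl⟩ -
  exact ⟨t ∩ t', ht.inter ht', u ∩ u', hu.inter hu', inter_inter_inter_comm t t' u u'⟩

lemma sup_eq_generateFrom_image2_inter (m₁ m₂ : MeasurableSpace Ω) :
    m₁ ⊔ m₂ =
      generateFrom (image2 (· ∩ ·) {s | MeasurableSet[m₁] s} {s | MeasurableSet[m₂] s}) := by
  refine le_antisymm (sup_le (fun t ht => ?_) (fun u hu => ?_)) (generateFrom_le ?_)
  · exact measurableSet_generateFrom ⟨t, ht, univ, .univ, inter_univ t⟩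
  · exact measurableSet_generateFrom ⟨univ, .univ, u, hu, univ_inter u⟩
  · rintro _ ⟨t, ht, u, hu, rfl⟩
    exact (le_sup_left (b := m₂) t ht).inter (le_sup_right (a := m₁) u hu)

end MeasurableSpace

namespace MeasureTheory

variable {Ω E : Type*} [NormedAddCommGroup E] [NormedSpace ℝ E]

theorem setIntegral_eq_of_isPiSystem {m mΩ : MeasurableSpace Ω} {μ : Measure Ω} (hm : m ≤ mΩ)
    {C : Set (Set Ω)} (hgen : m = MeasurableSpace.generateFrom C) (hC : IsPiSystem C)
    {f g : Ω → E} (hf : Integrable f μ) (hg : Integrable g μ)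
    (h_univ : ∫ ω, f ω ∂μ = ∫ ω, g ω ∂μ)
    (h_basic : ∀ s ∈ C, ∫ ω in s, f ω ∂μ = ∫ ω in s, g ω ∂μ) {s : Set Ω}
    (hs : MeasurableSet[m] s) : ∫ ω in s, f ω ∂μ = ∫ ω in s, g ω ∂μ := by
  induction s, hs using MeasurableSpace.induction_on_inter hgen hC with
  | empty => simp
  | basic t ht => exact h_basic t ht
  | compl t ht ih =>
    rw [setIntegral_compl (hm t ht) hf, setIntegral_compl (hm t ht) hg, h_univ, ih]
  | iUnion u hdisj hu ih =>
    rw [integral_iUnion (fun i => hm _ (hu i)) hdisj hf.integrableOn,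
      integral_iUnion (fun i => hm _ (hu i)) hdisj hg.integrableOn]
    exact tsum_congr ih

end MeasureTheory

namespace ProbabilityTheory

open Set

lemma norm_condExp_indicator_le_one {Ω : Type*} {mΩ : MeasurableSpace Ω} {μ : Measure Ω}
    (m : MeasurableSpace Ω) (s : Set Ω) : ∀ᵐ ω ∂μ, ‖(μ⟦s | m⟧) ω‖ ≤ 1 :=
  ae_bdd_abs_condExp_of_ae_bdd_abs (ae_of_all _ (norm_indicator_one_le_one s))

lemma condExp_indicator_preimage_zero_ae_eq {Ω : Type*} {m mΩ : MeasurableSpace Ω}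
    {μ : Measure Ω} [IsFiniteMeasure μ] (hm : m ≤ mΩ) {A : Ω → ℝ} (hA_meas : Measurable A)
    (hA : ∀ ω, A ω = 0 ∨ A ω = 1) : μ⟦A ⁻¹' {0} | m⟧ =ᵐ[μ] 1 - μ[A | m] := by
  have hA_int : Integrable A μ :=
    indicator_preimage_one_eq_self hA ▸
      (integrable_const 1).indicator (hA_meas (measurableSet_singleton 1))
  have h_one : μ[(1 : Ω → ℝ) | m] = 1 := condExp_const hm 1
  rw [indicator_preimage_zero_eq_one_sub hA]
  have h_sub := condExp_sub (m := m) (f := 1) (integrable_const (1 : ℝ)) hA_int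
  rwa [h_one] at h_sub

variable {Ω : Type*} {m' m₁ m₂ mΩ : MeasurableSpace Ω} [StandardBorelSpace Ω] {hm' : m' ≤ mΩ}
  {μ : Measure Ω} [IsFiniteMeasure μ] {T : Set Ω}

lemma CondIndep.setIntegral_condExp_indicator_inter (h : CondIndep m' m₁ m₂ hm' μ)
    (hm₁ : m₁ ≤ mΩ) (hm₂ : m₂ ≤ mΩ) {t u : Set Ω} (ht : MeasurableSet[m'] t)
    (hu : MeasurableSet[m₁] u) (hT : MeasurableSet[m₂] T) :
    ∫ ω in t ∩ u, (μ⟦T | m'⟧) ω ∂μ = ∫ ω in t ∩ u, T.indicator (fun _ => (1 : ℝ)) ω ∂μ := by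
  have hu' : MeasurableSet u := hm₁ u hu
  have hu_int : Integrable (u.indicator fun _ => (1 : ℝ)) μ := (integrable_const 1).indicator hu'
  have hT_bdd := norm_condExp_indicator_le_one (μ := μ) m' T
  rw [← setIntegral_indicator hu', ← setIntegral_indicator hu', indicator_indicator]
  calc ∫ ω in t, u.indicator (μ⟦T | m'⟧) ω ∂μ
      = ∫ ω in t, (μ⟦T | m'⟧ * u.indicator fun _ => (1 : ℝ)) ω ∂μ := by
        congr 1 with ω
        by_cases hω : ω ∈ u <;> simp [hω]
    _ = ∫ ω in t, (μ[μ⟦T | m'⟧ * u.indicator fun _ => (1 : ℝ) | m']) ω ∂μ :=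
        (setIntegral_condExp hm'
          (hu_int.bdd_mul (stronglyMeasurable_condExp.mono hm').aestronglyMeasurable hT_bdd)
          ht).symm
    _ = ∫ ω in t, (μ⟦T | m'⟧ * μ⟦u | m'⟧) ω ∂μ := by
        refine setIntegral_congr_ae (hm' t ht) ?_
        filter_upwards [condExp_stronglyMeasurable_mul_of_bound hm' stronglyMeasurable_condExp
          hu_int 1 hT_bdd] with ω hω _
        exact hω
    _ = ∫ ω in t, (μ⟦u ∩ T | m'⟧) ω ∂μ := by
        refine setIntegral_congr_ae (hm' t ht) ?_
        filter_upwards [(condIndep_iff m' m₁ m₂ hm' hm₁ hm₂ μ).1 h u T hu hT] with ω hω _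
        rw [hω, Pi.mul_apply, Pi.mul_apply, mul_comm]
    _ = ∫ ω in t, (u ∩ T).indicator (fun _ => (1 : ℝ)) ω ∂μ :=
        setIntegral_condExp hm' ((integrable_const 1).indicator (hu'.inter (hm₂ T hT))) ht

lemma CondIndep.condExp_indicator_sup_ae_eq (h : CondIndep m' m₁ m₂ hm' μ) (hm₁ : m₁ ≤ mΩ)
    (hm₂ : m₂ ≤ mΩ) (hT : MeasurableSet[m₂] T) : μ⟦T | m' ⊔ m₁⟧ =ᵐ[μ] μ⟦T | m'⟧ := by
  have hsup : m' ⊔ m₁ ≤ mΩ := sup_le hm' hm₁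
  have hT_int : Integrable (T.indicator fun _ => (1 : ℝ)) μ :=
    (integrable_const 1).indicator (hm₂ T hT)
  refine (ae_eq_condExp_of_forall_setIntegral_eq hsup hT_int
    (fun _ _ _ => integrable_condExp.integrableOn) (fun s hs _ => ?_)
    (stronglyMeasurable_condExp.mono (le_sup_left : m' ≤ m' ⊔ m₁)).aestronglyMeasurable).symm
  refine setIntegral_eq_of_isPiSystem hsup (MeasurableSpace.sup_eq_generateFrom_image2_inter m' m₁)
    (MeasurableSpace.isPiSystem_image2_inter m' m₁) integrable_condExp hT_int
    (integral_condExp hm') ?_ hs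
  rintro _ ⟨t, ht, u, hu, rfl⟩
  exact h.setIntegral_condExp_indicator_inter hm₁ hm₂ ht hu hT

lemma CondIndep.condExp_mul_indicator (h : CondIndep m' m₁ m₂ hm' μ) (hm₁ : m₁ ≤ mΩ)
    (hm₂ : m₂ ≤ mΩ) {f : Ω → ℝ} (hf : StronglyMeasurable[m₁] f) (hf_int : Integrable f μ)
    (hT : MeasurableSet[m₂] T) :
    μ[f * T.indicator (fun _ => 1) | m'] =ᵐ[μ] μ[f | m'] * μ⟦T | m'⟧ := by
  have hsup : m' ⊔ m₁ ≤ mΩ := sup_le hm' hm₁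
  have hT_int : Integrable (T.indicator fun _ => (1 : ℝ)) μ :=
    (integrable_const 1).indicator (hm₂ T hT)
  have hfT_int : Integrable (f * T.indicator fun _ => (1 : ℝ)) μ :=
    hf_int.mul_bdd hT_int.1 (ae_of_all _ (norm_indicator_one_le_one T))
  calc μ[f * T.indicator (fun _ => 1) | m']
      =ᵐ[μ] μ[μ[f * T.indicator (fun _ => 1) | m' ⊔ m₁] | m'] :=
        (condExp_condExp_of_le le_sup_left hsup).symm
    _ =ᵐ[μ] μ[f * μ⟦T | m'⟧ | m'] := by
        refine condExp_congr_ae ((condExp_mul_of_stronglyMeasurable_left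
          (hf.mono (le_sup_right : m₁ ≤ m' ⊔ m₁)) hfT_int hT_int).trans ?_)
        exact Filter.EventuallyEq.rfl.mul (h.condExp_indicator_sup_ae_eq hm₁ hm₂ hT)
    _ =ᵐ[μ] μ[f | m'] * μ⟦T | m'⟧ :=
        condExp_mul_of_stronglyMeasurable_right stronglyMeasurable_condExp
          (hf_int.mul_bdd (stronglyMeasurable_condExp.mono hm').aestronglyMeasurable
            (norm_condExp_indicator_le_one m' T)) hf_int

lemma CondIndepFun.condExp_mul_indicator_preimage {f g : Ω → ℝ} (h : CondIndepFun m' hm' f g μ)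
    (hf : Measurable f) (hg : Measurable g) (hf_int : Integrable f μ) {B : Set ℝ}
    (hB : MeasurableSet B) :
    μ[f * (g ⁻¹' B).indicator (fun _ => 1) | m'] =ᵐ[μ] μ[f | m'] * μ⟦g ⁻¹' B | m'⟧ :=
  ((condIndepFun_iff_condIndep m' hm' f g μ).1 h).condExp_mul_indicator hf.comap_le hg.comap_le
    (comap_measurable f).stronglyMeasurable hf_int ⟨B, hB, rfl⟩

lemma CondIndepFun.ae_eq_condExp_of_condExp_indicator_mul_eq {f g Y c : Ω → ℝ}
    (h : CondIndepFun m' hm' f g μ) (hf : Measurable f) (hg : Measurable g)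
    (hf_int : Integrable f μ) {B : Set ℝ} (hB : MeasurableSet B)
    (hY : ∀ᵐ ω ∂μ, g ω ∈ B → Y ω = f ω)
    (hc : μ[(g ⁻¹' B).indicator (fun _ => 1) * Y | m'] =ᵐ[μ] c * μ⟦g ⁻¹' B | m'⟧)
    (hB_pos : ∀ᵐ ω ∂μ, (μ⟦g ⁻¹' B | m'⟧) ω ≠ 0) : c =ᵐ[μ] μ[f | m'] := by
  have hYf : (g ⁻¹' B).indicator (fun _ => 1) * Y =ᵐ[μ] f * (g ⁻¹' B).indicator (fun _ => 1) := by
    filter_upwards [hY] with ω hω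
    by_cases hgω : g ω ∈ B <;> simp [hgω, hω]
  filter_upwards [hc.symm.trans ((condExp_congr_ae hYf).trans
    (h.condExp_mul_indicator_preimage hf hg hf_int hB)), hB_pos] with ω hω hω_pos
  exact mul_right_cancel₀ hω_pos hω

end ProbabilityTheory

theorem cond_on_treated_identification_general
    {Ω 𝒳 : Type*} [MeasurableSpace Ω] [StandardBorelSpace Ω]
    [m𝒳 : MeasurableSpace 𝒳]
    {μ : Measure Ω} [IsProbabilityMeasure μ]
    (X : Ω → 𝒳) (A Y Y0 Y1 : Ω → ℝ) (e : 𝒳 → ℝ) (m1 m0 : 𝒳 → ℝ)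
    (hX : Measurable X) (hA : Measurable A)
    (hY0 : Measurable Y0) (hY1 : Measurable Y1)
    (hY0int : Integrable Y0 μ) (hY1int : Integrable Y1 μ)
    -- binary treatment
    (hAbin : ∀ ω, A ω = 0 ∨ A ω = 1)
    -- consistency: Y = Y(A) almost surely
    (hcons : ∀ᵐ ω ∂μ, Y ω = if A ω = 1 then Y1 ω else Y0 ω)
    -- the propensity score e(X) is a version of E[A | σ(X)]
    (hps : μ[A | MeasurableSpace.comap X m𝒳] =ᵐ[μ] fun ω => e (X ω))
    -- positivity
    {η : ℝ} (hη : 0 < η)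
    (hpos : ∀ᵐ ω ∂μ, η ≤ e (X ω) ∧ e (X ω) ≤ 1 - η)
    -- no unmeasured confounding: (Y(0), Y(1)) ⫫ A ∣ σ(X)
    (hignor : CondIndepFun (MeasurableSpace.comap X m𝒳) hX.comap_le
      (fun ω => (Y0 ω, Y1 ω)) A μ)
    -- m(1,·) is a conditional outcome mean
    (hcm1 : μ[fun ω => (if A ω = 1 then (1 : ℝ) else 0) * Y ω | MeasurableSpace.comap X m𝒳]
      =ᵐ[μ] fun ω => m1 (X ω) *
        (μ[fun ω' => (if A ω' = 1 then (1 : ℝ) else 0) | MeasurableSpace.comap X m𝒳]) ω)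
    -- m(0,·) is a conditional outcome mean
    (hcm0 : μ[fun ω => (if A ω = 0 then (1 : ℝ) else 0) * Y ω | MeasurableSpace.comap X m𝒳]
      =ᵐ[μ] fun ω => m0 (X ω) *
        (μ[fun ω' => (if A ω' = 0 then (1 : ℝ) else 0) | MeasurableSpace.comap X m𝒳]) ω) :
    -- E[Y(1)·1{A=1} | σ(X)] = E[Y(1) | σ(X)]·E[1{A=1} | σ(X)] a.s.
    (μ[fun ω => Y1 ω * (if A ω = 1 then (1 : ℝ) else 0) | MeasurableSpace.comap X m𝒳]
      =ᵐ[μ] fun ω => (μ[Y1 | MeasurableSpace.comap X m𝒳]) ω *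
        (μ[fun ω' => (if A ω' = 1 then (1 : ℝ) else 0) | MeasurableSpace.comap X m𝒳]) ω)
    -- E[Y(0)·1{A=0} | σ(X)] = E[Y(0) | σ(X)]·E[1{A=0} | σ(X)] a.s.
    ∧ (μ[fun ω => Y0 ω * (if A ω = 0 then (1 : ℝ) else 0) | MeasurableSpace.comap X m𝒳]
      =ᵐ[μ] fun ω => (μ[Y0 | MeasurableSpace.comap X m𝒳]) ω *
        (μ[fun ω' => (if A ω' = 0 then (1 : ℝ) else 0) | MeasurableSpace.comap X m𝒳]) ω)
    -- consequently m(1,X) = E[Y(1) | σ(X)] a.s.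
    ∧ ((fun ω => m1 (X ω)) =ᵐ[μ] μ[Y1 | MeasurableSpace.comap X m𝒳])
    -- and m(0,X) = E[Y(0) | σ(X)] a.s.
    ∧ ((fun ω => m0 (X ω)) =ᵐ[μ] μ[Y0 | MeasurableSpace.comap X m𝒳]) := by
  have hci1 : CondIndepFun _ hX.comap_le Y1 A μ := hignor.comp measurable_snd measurable_id
  have hci0 : CondIndepFun _ hX.comap_le Y0 A μ := hignor.comp measurable_fst measurable_id
  have hE1 : μ⟦A ⁻¹' {1} | MeasurableSpace.comap X m𝒳⟧ =ᵐ[μ] fun ω => e (X ω) := by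
    rw [indicator_preimage_one_eq_self hAbin]
    exact hps
  have hE0 : μ⟦A ⁻¹' {0} | MeasurableSpace.comap X m𝒳⟧ =ᵐ[μ] fun ω => 1 - e (X ω) := by
    filter_upwards [condExp_indicator_preimage_zero_ae_eq hX.comap_le hA hAbin, hps] with ω h h'
    rw [h, Pi.sub_apply, h', Pi.one_apply]
  have hind (a : ℝ) (ω : Ω) :
      (if A ω = a then (1 : ℝ) else 0) = (A ⁻¹' {a}).indicator (fun _ => 1) ω := by
    by_cases h : A ω = a <;> simp [h]
  simp only [hind] at hcm1 hcm0 ⊢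
  refine ⟨hci1.condExp_mul_indicator_preimage hY1 hA hY1int (measurableSet_singleton 1),
    hci0.condExp_mul_indicator_preimage hY0 hA hY0int (measurableSet_singleton 0), ?_, ?_⟩
  · refine hci1.ae_eq_condExp_of_condExp_indicator_mul_eq hY1 hA hY1int
      (measurableSet_singleton 1) ?_ hcm1 ?_
    · filter_upwards [hcons] with ω hω h1
      simp [hω, Set.mem_singleton_iff.1 h1]
    · filter_upwards [hE1, hpos] with ω h hp
      rw [h]
      exact (hη.trans_le hp.1).ne'
  · refine hci0.ae_eq_condExp_of_condExp_indicator_mul_eq hY0 hA hY0int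
      (measurableSet_singleton 0) ?_ hcm0 ?_
    · filter_upwards [hcons] with ω hω h0
      simp [hω, Set.mem_singleton_iff.1 h0]
    · filter_upwards [hE0, hpos] with ω h hp
      rw [h]
      exact (hη.trans_le (by linarith [hp.2])).ne'

/-- **Conditional-on-treated identification used in the G-formula proof.**
Under consistency and no unmeasured confounding, for each `a ∈ {0,1}`,
`E[Y(a)·1{A=a} | σ(X)] = E[Y(a) | σ(X)]·E[1{A=a} | σ(X)]` almost surely; consequently,
since positivity also holds and `m(a,·)` is a conditional outcome mean
(`E[1{A=a}·Y | σ(X)] = m(a,X)·E[1{A=a} | σ(X)]` a.s.), `m(a,X) = E[Y(a) | σ(X)]` a.s. -/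
theorem cond_on_treated_identification
    {Ω 𝒳 : Type*} [MeasurableSpace Ω] [StandardBorelSpace Ω]
    [m𝒳 : MeasurableSpace 𝒳]
    {μ : Measure Ω} [IsProbabilityMeasure μ]
    (X : Ω → 𝒳) (A Y Y0 Y1 : Ω → ℝ) (e : 𝒳 → ℝ) (m1 m0 : 𝒳 → ℝ)
    (hX : Measurable X) (hA : Measurable A) (hY : Measurable Y)
    (hY0 : Measurable Y0) (hY1 : Measurable Y1) (he : Measurable e)
    (hm1 : Measurable m1) (hm0 : Measurable m0)
    (hY0int : Integrable Y0 μ) (hY1int : Integrable Y1 μ)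
    -- binary treatment
    (hAbin : ∀ ω, A ω = 0 ∨ A ω = 1)
    -- consistency: Y = Y(A) almost surely
    (hcons : ∀ᵐ ω ∂μ, Y ω = if A ω = 1 then Y1 ω else Y0 ω)
    -- the propensity score e(X) is a version of E[A | σ(X)]
    (hps : μ[A | MeasurableSpace.comap X m𝒳] =ᵐ[μ] fun ω => e (X ω))
    -- positivity
    {η : ℝ} (hη : 0 < η)
    (hpos : ∀ᵐ ω ∂μ, η ≤ e (X ω) ∧ e (X ω) ≤ 1 - η)
    -- no unmeasured confounding: (Y(0), Y(1)) ⫫ A ∣ σ(X)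
    (hignor : CondIndepFun (MeasurableSpace.comap X m𝒳) hX.comap_le
      (fun ω => (Y0 ω, Y1 ω)) A μ)
    -- m(1,·) is a conditional outcome mean
    (hcm1 : μ[fun ω => (if A ω = 1 then (1 : ℝ) else 0) * Y ω | MeasurableSpace.comap X m𝒳]
      =ᵐ[μ] fun ω => m1 (X ω) *
        (μ[fun ω' => (if A ω' = 1 then (1 : ℝ) else 0) | MeasurableSpace.comap X m𝒳]) ω)
    -- m(0,·) is a conditional outcome mean
    (hcm0 : μ[fun ω => (if A ω = 0 then (1 : ℝ) else 0) * Y ω | MeasurableSpace.comap X m𝒳]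
      =ᵐ[μ] fun ω => m0 (X ω) *
        (μ[fun ω' => (if A ω' = 0 then (1 : ℝ) else 0) | MeasurableSpace.comap X m𝒳]) ω) :
    -- E[Y(1)·1{A=1} | σ(X)] = E[Y(1) | σ(X)]·E[1{A=1} | σ(X)] a.s.
    (μ[fun ω => Y1 ω * (if A ω = 1 then (1 : ℝ) else 0) | MeasurableSpace.comap X m𝒳]
      =ᵐ[μ] fun ω => (μ[Y1 | MeasurableSpace.comap X m𝒳]) ω *
        (μ[fun ω' => (if A ω' = 1 then (1 : ℝ) else 0) | MeasurableSpace.comap X m𝒳]) ω)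
    -- E[Y(0)·1{A=0} | σ(X)] = E[Y(0) | σ(X)]·E[1{A=0} | σ(X)] a.s.
    ∧ (μ[fun ω => Y0 ω * (if A ω = 0 then (1 : ℝ) else 0) | MeasurableSpace.comap X m𝒳]
      =ᵐ[μ] fun ω => (μ[Y0 | MeasurableSpace.comap X m𝒳]) ω *
        (μ[fun ω' => (if A ω' = 0 then (1 : ℝ) else 0) | MeasurableSpace.comap X m𝒳]) ω)
    -- consequently m(1,X) = E[Y(1) | σ(X)] a.s.
    ∧ ((fun ω => m1 (X ω)) =ᵐ[μ] μ[Y1 | MeasurableSpace.comap X m𝒳])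
    -- and m(0,X) = E[Y(0) | σ(X)] a.s.
    ∧ ((fun ω => m0 (X ω)) =ᵐ[μ] μ[Y0 | MeasurableSpace.comap X m𝒳]) :=
  cond_on_treated_identification_general (m𝒳 := m𝒳) X A Y Y0 Y1 e m1 m0 hX hA hY0 hY1 hY0int hY1int
    hAbin hcons hps hη hpos hignor hcm1 hcm0
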